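/- Transitivity of nominal equality: if ∇ ⊢ t₁ ≈ t₂ and ∇ ⊢ t₂ ≈ t₃ then ∇ ⊢ t₁ ≈ t₃. -/

import Mathlib

abbrev Atom := ℕ
abbrev Var := ℕ
abbrev Perm := List (Atom × Atom)

def swap (p : Atom × Atom) (a : Atom) : Atom :=
  if a = p.1 then p.2 else if a = p.2 then p.1 else a

def permAtom : Perm → Atom → Atom
  | [], a => a
  | p :: π, a => swap p (permAtom π a)

def ds (π π' : Perm) : Set Atom := {a | permAtom π a ≠ permAtom π' a}

inductive Trm : Type
  | unit : Trm
  | pair : Trm → Trm → Trm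
  | fn : ℕ → Trm → Trm
  | atom : Atom → Trm
  | abs : Atom → Trm → Trm
  | susp : Perm → Var → Trm

def permTrm (π : Perm) : Trm → Trm
  | .unit => .unit
  | .pair t₁ t₂ => .pair (permTrm π t₁) (permTrm π t₂)
  | .fn f t => .fn f (permTrm π t)
  | .atom a => .atom (permAtom π a)
  | .abs a t => .abs (permAtom π a) (permTrm π t)
  | .susp π' X => .susp (π ++ π') X

abbrev Env := Set (Atom × Var)

inductive fresh (Γ : Env) (a : Atom) : Trm → Prop
  | unit : fresh Γ a .unit
  | pair {t₁ t₂} : fresh Γ a t₁ → fresh Γ a t₂ → fresh Γ a (.pair t₁ t₂)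
  | fn {f t} : fresh Γ a t → fresh Γ a (.fn f t)
  | abs₁ {t} : fresh Γ a (.abs a t)
  | abs₂ {b t} : a ≠ b → fresh Γ a t → fresh Γ a (.abs b t)
  | atom {b} : a ≠ b → fresh Γ a (.atom b)
  | susp {π X} : (permAtom π.reverse a, X) ∈ Γ → fresh Γ a (.susp π X)

inductive equ (Γ : Env) : Trm → Trm → Prop
  | unit : equ Γ .unit .unit
  | pair {t₁ t₂ s₁ s₂} : equ Γ t₁ t₂ → equ Γ s₁ s₂ → equ Γ (.pair t₁ s₁) (.pair t₂ s₂)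
  | fn {f t₁ t₂} : equ Γ t₁ t₂ → equ Γ (.fn f t₁) (.fn f t₂)
  | abs₁ {a t₁ t₂} : equ Γ t₁ t₂ → equ Γ (.abs a t₁) (.abs a t₂)
  | abs₂ {a b t₁ t₂} : a ≠ b → fresh Γ a t₂ → equ Γ t₁ (permTrm [(a, b)] t₂) →
      equ Γ (.abs a t₁) (.abs b t₂)
  | atom {a} : equ Γ (.atom a) (.atom a)
  | susp {π π' X} : (∀ c ∈ ds π π', (c, X) ∈ Γ) → equ Γ (.susp π X) (.susp π' X)

inductive weak : Trm → Trm → Prop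
  | unit : weak .unit .unit
  | atom {a} : weak (.atom a) (.atom a)
  | fn {f t t'} : weak t t' → weak (.fn f t) (.fn f t')
  | pair {t₁ t₂ s₁ s₂} : weak t₁ s₁ → weak t₂ s₂ → weak (.pair t₁ t₂) (.pair s₁ s₂)
  | abs {a t t'} : weak t t' → weak (.abs a t) (.abs a t')
  | susp {π π' X} : ds π π' = ∅ → weak (.susp π X) (.susp π' X)

def subst (σ : Var → Option Trm) : Trm → Trm
  | .unit => .unit
  | .pair t₁ t₂ => .pair (subst σ t₁) (subst σ t₂)
  | .fn f t => .fn f (subst σ t)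
  | .atom a => .atom a
  | .abs a t => .abs a (subst σ t)
  | .susp π X =>
      match σ X with
      | some t => permTrm π t
      | none => .susp π X

/-! Transitivity is proved by strong induction on the size of the middle term; size is invariant
under permutation and under `≈`. The only real work is the case `a.t₁ ≈ b.t₂ ≈ c.t₃` with
`a, b, c` distinct: by equivariance `(a b)·t₂ ≈ (a c)(a b)·t₃`, and `(a b)·t₃ ≈ t₃` because `a`
and `b` are both fresh for `t₃`. So the induction hypothesis is needed at permuted copies of
`t₃`, which have the size of `t₂` but are not subterms of it. -/

def permEquiv (π : Perm) : Equiv.Perm Atom :=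
  (π.map fun p => Equiv.swap p.1 p.2).prod

@[simp]
lemma permEquiv_nil : permEquiv [] = 1 := rfl

@[simp]
lemma permEquiv_cons (p : Atom × Atom) (π : Perm) :
    permEquiv (p :: π) = Equiv.swap p.1 p.2 * permEquiv π := by
  simp [permEquiv]

@[simp]
lemma permEquiv_append (π π' : Perm) : permEquiv (π ++ π') = permEquiv π * permEquiv π' := by
  simp [permEquiv]

@[simp]
lemma permEquiv_reverse (π : Perm) : permEquiv π.reverse = (permEquiv π)⁻¹ := by
  simp [permEquiv, List.prod_inv_reverse, Function.comp_def, List.map_reverse]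

@[simp]
lemma permAtom_eq_permEquiv (π : Perm) (a : Atom) : permAtom π a = permEquiv π a := by
  induction π with
  | nil => rfl
  | cons p π ih => simp [permAtom, swap, ih, Equiv.swap_apply_def]

lemma mem_ds_iff {π π' : Perm} {a : Atom} : a ∈ ds π π' ↔ permEquiv π a ≠ permEquiv π' a := by
  simp [ds]

lemma ds_eq_empty_iff {π π' : Perm} : ds π π' = ∅ ↔ permEquiv π = permEquiv π' := by
  simp [Set.eq_empty_iff_forall_notMem, mem_ds_iff, Equiv.ext_iff]

lemma permTrm_permTrm (π π' : Perm) (t : Trm) :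
    permTrm π (permTrm π' t) = permTrm (π ++ π') t := by
  induction t <;> simp_all [permTrm]

@[simp]
lemma permTrm_nil (t : Trm) : permTrm [] t = t := by
  induction t <;> simp_all [permTrm]

def Trm.size : Trm → ℕ
  | .unit | .atom _ | .susp _ _ => 1
  | .pair t₁ t₂ => t₁.size + t₂.size + 1
  | .fn _ t | .abs _ t => t.size + 1

@[simp]
lemma Trm.size_permTrm (π : Perm) (t : Trm) : (permTrm π t).size = t.size := by
  induction t <;> simp_all [permTrm, Trm.size]

lemma weak_permTrm_of_permEquiv_eq {π π' : Perm} (h : permEquiv π = permEquiv π') (t : Trm) :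
    weak (permTrm π t) (permTrm π' t) := by
  induction t with
  | unit => exact .unit
  | pair _ _ ih₁ ih₂ => exact .pair ih₁ ih₂
  | fn _ _ ih => exact .fn ih
  | atom a => simpa [permTrm, h] using weak.atom
  | abs a _ ih => simpa [permTrm, h] using weak.abs ih
  | susp => exact .susp (ds_eq_empty_iff.2 (by simp [h]))

lemma weak.perm {s s' : Trm} (π : Perm) (h : weak s s') : weak (permTrm π s) (permTrm π s') := by
  induction h with
  | unit => exact .unit
  | atom => exact .atom
  | fn _ ih => exact .fn ih
  | pair _ _ ih₁ ih₂ => exact .pair ih₁ ih₂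
  | abs _ ih => exact .abs ih
  | susp hd => exact .susp (ds_eq_empty_iff.2 (by simp [ds_eq_empty_iff.1 hd]))

section Nominal

variable {Γ : Env}

lemma fresh.of_weak {a : Atom} {s s' : Trm} (h : fresh Γ a s) (hw : weak s s') :
    fresh Γ a s' := by
  induction hw with
  | unit | atom => exact h
  | fn _ ih => cases h with | fn h => exact .fn (ih h)
  | pair _ _ ih₁ ih₂ => cases h with | pair h₁ h₂ => exact .pair (ih₁ h₁) (ih₂ h₂)
  | abs _ ih =>
      cases h with
      | abs₁ => exact .abs₁
      | abs₂ hne h => exact .abs₂ hne (ih h)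
  | susp hd =>
      cases h with
      | susp hm => exact .susp (by simpa [ds_eq_empty_iff.1 hd] using hm)

lemma fresh.perm {a : Atom} {t : Trm} (π : Perm) (h : fresh Γ a t) :
    fresh Γ (permEquiv π a) (permTrm π t) := by
  induction h with
  | unit => exact .unit
  | pair _ _ ih₁ ih₂ => exact .pair ih₁ ih₂
  | fn _ ih => exact .fn ih
  | abs₁ => simpa [permTrm] using fresh.abs₁
  | abs₂ hne _ ih => simpa [permTrm] using fresh.abs₂ (by simpa using hne) ih
  | atom hne => simpa [permTrm] using fresh.atom (by simpa using hne)
  | susp hm => exact .susp (by simpa using hm)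

lemma fresh_perm_iff {a : Atom} {t : Trm} (π : Perm) :
    fresh Γ (permEquiv π a) (permTrm π t) ↔ fresh Γ a t := by
  refine ⟨fun h => ?_, fresh.perm π⟩
  have h' := fresh.perm π.reverse h
  rw [permTrm_permTrm] at h'
  refine (by simpa using h' : fresh Γ a _).of_weak ?_
  simpa using weak_permTrm_of_permEquiv_eq (π := π.reverse ++ π) (π' := []) (by simp) t

lemma equ_refl (t : Trm) : equ Γ t t := by
  induction t with
  | unit => exact .unit
  | pair _ _ ih₁ ih₂ => exact .pair ih₁ ih₂
  | fn _ _ ih => exact .fn ih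
  | atom => exact .atom
  | abs _ _ ih => exact .abs₁ ih
  | susp => exact .susp fun _ hc => absurd rfl hc

lemma equ_of_weak {t t' : Trm} (h : weak t t') : equ Γ t t' := by
  induction h with
  | unit => exact .unit
  | atom => exact .atom
  | fn _ ih => exact .fn ih
  | pair _ _ ih₁ ih₂ => exact .pair ih₁ ih₂
  | abs _ ih => exact .abs₁ ih
  | susp hd => exact .susp fun c hc => by simp [ds_eq_empty_iff.1 hd, mem_ds_iff] at hc

lemma equ.trans_weak {t s s' : Trm} (h : equ Γ t s) (hw : weak s s') : equ Γ t s' := by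
  induction h generalizing s' with
  | unit | atom => cases hw; exact equ_refl _
  | pair _ _ ih₁ ih₂ => cases hw with | pair hw₁ hw₂ => exact .pair (ih₁ hw₁) (ih₂ hw₂)
  | fn _ ih => cases hw with | fn hw => exact .fn (ih hw)
  | abs₁ _ ih => cases hw with | abs hw => exact .abs₁ (ih hw)
  | abs₂ hne hf _ ih =>
      cases hw with | abs hw => exact .abs₂ hne (hf.of_weak hw) (ih (hw.perm _))
  | susp hm =>
      cases hw with
      | susp hd =>
          exact .susp fun c hc => hm c (by simpa [mem_ds_iff, ds_eq_empty_iff.1 hd] using hc)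

lemma equ.perm {s s' : Trm} (π : Perm) (h : equ Γ s s') :
    equ Γ (permTrm π s) (permTrm π s') := by
  induction h with
  | unit => exact .unit
  | pair _ _ ih₁ ih₂ => exact .pair ih₁ ih₂
  | fn _ ih => exact .fn ih
  | abs₁ _ ih => exact .abs₁ ih
  | @abs₂ a b _ t₂ hne hf _ ih =>
      refine .abs₂ (by simpa using hne) (by simpa using fresh.perm π hf) ?_
      rw [permTrm_permTrm] at ih
      refine ih.trans_weak ?_
      rw [permTrm_permTrm]
      exact weak_permTrm_of_permEquiv_eq (by simp [Equiv.mul_swap_eq_swap_mul]) t₂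
  | atom => exact .atom
  | susp hm => exact .susp fun c hc => hm c (by simpa [mem_ds_iff] using hc)

lemma fresh.of_equ {a : Atom} {s s' : Trm} (hf : fresh Γ a s) (h : equ Γ s s') :
    fresh Γ a s' := by
  induction h with
  | unit => exact .unit
  | pair _ _ ih₁ ih₂ => cases hf with | pair h₁ h₂ => exact .pair (ih₁ h₁) (ih₂ h₂)
  | fn _ ih => cases hf with | fn h => exact .fn (ih h)
  | abs₁ _ ih =>
      cases hf with
      | abs₁ => exact .abs₁
      | abs₂ hne h => exact .abs₂ hne (ih h)
  | @abs₂ d e _ t' hne hfd _ ih =>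
      cases hf with
      | abs₁ => exact .abs₂ hne hfd
      | abs₂ had h =>
          rcases eq_or_ne a e with rfl | hae
          · exact .abs₁
          · have h' := ih h
            rw [← Equiv.swap_apply_of_ne_of_ne had hae] at h'
            exact .abs₂ hae ((fresh_perm_iff [(d, e)]).1 (by simpa using h'))
  | atom => exact hf
  | @susp π π' X hm =>
      cases hf with
      | susp hmem =>
          refine .susp ?_
          by_cases he : (permEquiv π')⁻¹ a = (permEquiv π)⁻¹ a
          · simpa [he] using hmem
          · simpa using hm _ (by simpa [mem_ds_iff, ← Equiv.eq_symm_apply] using he)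

lemma equ.size_eq {s s' : Trm} (h : equ Γ s s') : s.size = s'.size := by
  induction h <;> simp_all [Trm.size]

lemma equ_swap_of_fresh {a b : Atom} {t : Trm} (ha : fresh Γ a t) (hb : fresh Γ b t) :
    equ Γ (permTrm [(a, b)] t) t := by
  rcases eq_or_ne a b with rfl | hab
  · simpa using equ_of_weak (Γ := Γ) (weak_permTrm_of_permEquiv_eq (π := [(a, a)]) (π' := [])
      (by simp [Equiv.Perm.one_def]) t)
  induction t with
  | unit => exact .unit
  | pair _ _ ih₁ ih₂ =>
      cases ha with | pair ha₁ ha₂ => cases hb with | pair hb₁ hb₂ =>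
      exact .pair (ih₁ ha₁ hb₁) (ih₂ ha₂ hb₂)
  | fn _ _ ih => cases ha with | fn ha => cases hb with | fn hb => exact .fn (ih ha hb)
  | atom c =>
      cases ha with | atom ha => cases hb with | atom hb =>
      simpa [permTrm, Equiv.swap_apply_of_ne_of_ne ha.symm hb.symm] using equ.atom
  | abs d s ih =>
      simp only [permTrm, permAtom_eq_permEquiv, permEquiv_cons, permEquiv_nil, mul_one]
      rcases eq_or_ne d a with rfl | hda
      · cases hb with
        | abs₁ => exact absurd rfl hab
        | abs₂ _ hb =>
            rw [Equiv.swap_apply_left]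
            exact .abs₂ hab.symm hb
              (equ_of_weak (weak_permTrm_of_permEquiv_eq (by simp [Equiv.swap_comm]) s))
      rcases eq_or_ne d b with rfl | hdb
      · cases ha with
        | abs₁ => exact absurd rfl hda
        | abs₂ _ ha =>
            rw [Equiv.swap_apply_right]
            exact .abs₂ hab ha (equ_refl _)
      cases ha with
      | abs₁ => exact absurd rfl hda
      | abs₂ _ ha =>
          cases hb with
          | abs₁ => exact absurd rfl hdb
          | abs₂ _ hb =>
              rw [Equiv.swap_apply_of_ne_of_ne hda hdb]
              exact .abs₁ (ih ha hb)
  | susp π X =>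
      cases ha with | susp ha => cases hb with | susp hb =>
      refine .susp fun c hc => ?_
      have hc' : permEquiv π c = a ∨ permEquiv π c = b := by
        by_contra! h
        exact mem_ds_iff.1 hc (by simp [Equiv.swap_apply_of_ne_of_ne h.1 h.2])
      rcases hc' with hc' | hc'
      · simpa [← hc'] using ha
      · simpa [← hc'] using hb

end Nominal

def TransAt (Γ : Env) (s : Trm) : Prop :=
  ∀ t₁ t₃, equ Γ t₁ s → equ Γ s t₃ → equ Γ t₁ t₃

section Trans

variable {Γ : Env}

lemma transAt_pair {s₁ s₂ : Trm} (h₁ : TransAt Γ s₁) (h₂ : TransAt Γ s₂) :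
    TransAt Γ (.pair s₁ s₂) := by
  intro _ _ e₁ e₂
  cases e₁ with | pair e₁ e₁' => cases e₂ with | pair e₂ e₂' =>
  exact .pair (h₁ _ _ e₁ e₂) (h₂ _ _ e₁' e₂')

lemma transAt_fn {f : ℕ} {s : Trm} (h : TransAt Γ s) : TransAt Γ (.fn f s) := by
  intro _ _ e₁ e₂
  cases e₁ with | fn e₁ => cases e₂ with | fn e₂ => exact .fn (h _ _ e₁ e₂)

lemma transAt_susp (π : Perm) (X : Var) : TransAt Γ (.susp π X) := by
  intro _ _ e₁ e₂
  cases e₁ with | @susp π₁ _ _ hm₁ => cases e₂ with | susp hm₂ =>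
  refine .susp fun c hc => ?_
  by_cases he : permEquiv π₁ c = permEquiv π c
  · exact hm₂ c (by simpa [mem_ds_iff, he] using hc)
  · exact hm₁ c (mem_ds_iff.2 he)

lemma transAt_abs {b : Atom} {u : Trm} (ih : ∀ s, s.size = u.size → TransAt Γ s) :
    TransAt Γ (.abs b u) := by
  intro _ _ e₁ e₂
  cases e₁ with
  | abs₁ e₁ =>
      cases e₂ with
      | abs₁ e₂ => exact .abs₁ (ih u rfl _ _ e₁ e₂)
      | abs₂ hne hf e₂ => exact .abs₂ hne hf (ih u rfl _ _ e₁ e₂)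
  | @abs₂ a _ _ _ hab ha e₁ =>
      cases e₂ with
      | abs₁ e₂ =>
          exact .abs₂ hab (ha.of_equ e₂) (ih _ (by simp) _ _ e₁ (e₂.perm [(a, b)]))
      | @abs₂ _ c _ u₃ hbc hb e₂ =>
          have e₂' := e₂.perm [(a, b)]
          rw [permTrm_permTrm] at e₂'
          have hsize : u₃.size = u.size := by simpa using e₂.size_eq.symm
          rcases eq_or_ne a c with rfl | hac
          · refine .abs₁ (ih _ (by simp) _ _ e₁ (e₂'.trans_weak ?_))
            simpa using weak_permTrm_of_permEquiv_eq (π' := []) (by simp [Equiv.swap_comm]) u₃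
          have ha₃ : fresh Γ a u₃ := by
            have h := ha.of_equ e₂
            rw [← Equiv.swap_apply_of_ne_of_ne hab hac] at h
            exact (fresh_perm_iff [(b, c)]).1 (by simpa using h)
          -- (a b)(b c) = (a c)(a b)
          have e₃ : equ Γ (permTrm [(a, b)] u) (permTrm [(a, c)] (permTrm [(a, b)] u₃)) := by
            refine e₂'.trans_weak ?_
            rw [permTrm_permTrm]
            refine weak_permTrm_of_permEquiv_eq ?_ u₃
            ext x
            simp only [permEquiv_append, permEquiv_cons, permEquiv_nil, mul_one,
              Equiv.Perm.mul_apply, Equiv.swap_apply_def]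
            split_ifs <;> simp_all
          refine .abs₂ hac ha₃ (ih _ (by simp [hsize]) _ _ (ih _ (by simp) _ _ e₁ e₃) ?_)
          exact (equ_swap_of_fresh ha₃ hb).perm [(a, c)]

end Trans

theorem equ_trans (Γ : Env) (t₁ t₂ t₃ : Trm)
    (h₁ : equ Γ t₁ t₂) (h₂ : equ Γ t₂ t₃) : equ Γ t₁ t₃ := by
  suffices ∀ n, ∀ s : Trm, s.size = n → TransAt Γ s from this _ t₂ rfl t₁ t₃ h₁ h₂
  intro n
  induction n using Nat.strong_induction_on with
  | _ n ih =>
    rintro (_ | ⟨s₁, s₂⟩ | ⟨f, s⟩ | a | ⟨b, u⟩ | ⟨π, X⟩) rfl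
    · rintro _ _ ⟨⟩ h; exact h
    · exact transAt_pair (ih _ (by simp [Trm.size]) _ rfl) (ih _ (by simp [Trm.size]) _ rfl)
    · exact transAt_fn (ih _ (by simp [Trm.size]) _ rfl)
    · rintro _ _ ⟨⟩ h; exact h
    · exact transAt_abs fun s hs => ih _ (by simp [Trm.size, hs]) s rfl
    · exact transAt_susp π X
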